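/- 𝔡 = ℵ₁ if and only if there exists a partition p:[ω₁]²→ω with injective, almost-disjoint and Cohen fibers which satisfies: for every ordinal ε < ω₁ and every function h:ε→ω there exists γ < ω₁ such that for every finite set b ⊆ ω₁ \ γ there exists a finite set Δ ⊆ ε such that (i) for all α ∈ ε \ Δ and β ∈ b, h(α) < p(α,β), and (ii) the map (α,β) ↦ p(α,β) is injective on (ε \ Δ) × b. -/

import Mathlib

noncomputable section

open Cardinal Set Ordinal

/-- The set of countable ordinals, as a type of order type `ω₁`. -/
abbrev Omega1 : Type := (Ordinal.omega 1).ToType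

instance : Nonempty Omega1 :=
  Ordinal.nonempty_toType_iff.2
    (Ordinal.omega0_pos.trans Ordinal.omega0_lt_omega_one).ne'

/-- Proposition (M): there is a nonmeager set of reals of cardinality `ℵ₁`. -/
def PropM : Prop := ∃ X : Set ℝ, #X = Cardinal.aleph 1 ∧ ¬ IsMeagre X

/-- The dominating number `𝔡`: the least cardinality of a family `D ⊆ ωω` such that
every `f : ω → ω` is eventually dominated (in the sense `f n ≤ d n` for all but
finitely many `n`) by some member of `D`. -/
def domNumber : Cardinal :=
  sInf { κ : Cardinal | ∃ D : Set (ℕ → ℕ), #D = κ ∧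
    ∀ f : ℕ → ℕ, ∃ d ∈ D, ∀ᶠ n in Filter.atTop, f n ≤ d n }

/-- `p` has injective fibers iff `p(α,β) ≠ p(α',β)` whenever `α < α' < β`. -/
def InjectiveFibers (p : Omega1 → Omega1 → ℕ) : Prop :=
  ∀ α α' β : Omega1, α < α' → α' < β → p α β ≠ p α' β

/-- `p` has almost-disjoint fibers iff for all `β < β' < ω₁` the set
`{p(α,β) : α < β} ∩ {p(α,β') : α < β}` is finite. -/
def AlmostDisjointFibers (p : Omega1 → Omega1 → ℕ) : Prop :=
  ∀ β β' : Omega1, β < β' →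
    ({n : ℕ | ∃ α : Omega1, α < β ∧ p α β = n} ∩
      {n : ℕ | ∃ α : Omega1, α < β ∧ p α β' = n}).Finite

/-- `p` has Cohen fibers iff for every injection `g` from a finite subset of `ω₁` to
`ω`, the set of `β < ω₁` such that `g(α) = p(α,β)` for all `α ∈ a` with `α < β` is
cofinal in `ω₁`. -/
def CohenFibers (p : Omega1 → Omega1 → ℕ) : Prop :=
  ∀ (a : Finset Omega1) (g : Omega1 → ℕ), Set.InjOn g ↑a →
    ∀ γ : Omega1, ∃ β : Omega1, γ ≤ β ∧ ∀ α ∈ a, α < β → p α β = g α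

/-!
If `𝔡 = ℵ₁`, fix a dominating family `(d ξ)_{ξ < ω₁}`, an enumeration `enum β` of `[0, β]` for
every `β` (with index map `idx β`), and a bookkeeping map `c` taking every finite partial injection
`(a, g)` as its value cofinally often. The fiber `p(·, β)` is built by recursion on `β`: on the
finite set `a` of `c β` it equals `g`; at any other `α` it is `⟨n, m⟩` with `n = idx β α` and `m`
above (1) the values `p(enum δ n, δ)` of the earlier fibers `δ = enum β k`, `k ≤ n`,
(2) `d ξ (idx ε α)` for `ε, ξ` among `enum β 0, …, enum β n`, and (3) the values of `g`.

The first coordinate `n` and (3) make each fiber injective. By (1), a collision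
`p(α, β) = p(α', β')` with `β < β'` forces `idx β α < idx β' β`, so only finitely many `α`
collide; this gives almost-disjointness and injectivity on `(ε \ Δ) × b`. By (2), once `d ξ`
dominates `h ∘ enum ε`, every fiber above `max ε ξ` dominates `h` on `ε` off a finite set.

Conversely, the restrictions of the fibers to `ω` many points below some `ε` form a dominating
family of size `ℵ₁`, and a diagonal argument shows that no countable family dominates.
-/

namespace Omega1

lemma mk_eq : #Omega1 = ℵ₁ := by
  simp [Omega1, Ordinal.card_omega]

instance : Infinite Omega1 :=
  Cardinal.infinite_iff.2 (mk_eq ▸ aleph0_le_aleph 1)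

lemma countable_Iic (β : Omega1) : (Iic β).Countable := by
  rw [← Iio_insert, countable_insert, ← le_aleph0_iff_set_countable, ← Order.lt_succ_iff,
    succ_aleph0, ← mk_eq]
  exact mk_Iio_lt β (by simp [Cardinal.ord_aleph])

lemma not_countable_univ : ¬ (Set.univ : Set Omega1).Countable := by
  rw [← le_aleph0_iff_set_countable, mk_univ, mk_eq, ← succ_aleph0]
  exact (Order.lt_succ aleph0).not_ge

lemma exists_forall_lt_of_countable {s : Set Omega1} (hs : s.Countable) :
    ∃ γ, ∀ α ∈ s, α < γ := by
  have hcov : (⋃ α ∈ s, Iic α) ≠ Set.univ := fun h =>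
    not_countable_univ (h ▸ hs.biUnion fun α _ => countable_Iic α)
  obtain ⟨γ, hγ⟩ := (ne_univ_iff_exists_notMem _).1 hcov
  exact ⟨γ, fun α hα => not_le.1 fun h => hγ (mem_biUnion hα h)⟩

lemma exists_mem_le_of_not_countable {s : Set Omega1} (hs : ¬ s.Countable) (γ : Omega1) :
    ∃ β ∈ s, γ ≤ β := by
  by_contra! h
  exact hs ((countable_Iic γ).mono fun β hβ => (h β hβ).le)

lemma exists_cofinal_fibers {T : Type} [Nonempty T] (hT : #T ≤ ℵ₁) :
    ∃ c : Omega1 → T, ∀ t γ, ∃ β, γ ≤ β ∧ c β = t := by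
  have hcard : #(Omega1 × T) = #Omega1 := by
    rw [mk_prod, Cardinal.lift_id, Cardinal.lift_id, mk_eq]
    exact mul_eq_left (aleph0_le_aleph 1) hT (mk_ne_zero T)
  obtain ⟨e⟩ := Cardinal.eq.1 hcard
  refine ⟨fun β => (e.symm β).2, fun t γ => ?_⟩
  have hfiber : ¬ {β | (e.symm β).2 = t}.Countable := by
    refine fun hc => not_countable_univ ((hc.image fun β => (e.symm β).1).mono fun x _ => ?_)
    exact ⟨e (x, t), by simp, by simp⟩
  obtain ⟨β, hβ, hγβ⟩ := exists_mem_le_of_not_countable hfiber γ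
  exact ⟨β, hγβ, hβ⟩

def enum (β : Omega1) : ℕ → Omega1 :=
  ((countable_Iic β).exists_eq_range nonempty_Iic).choose

lemma range_enum (β : Omega1) : range (enum β) = Iic β :=
  ((countable_Iic β).exists_eq_range nonempty_Iic).choose_spec.symm

def idx (β : Omega1) : Omega1 → ℕ :=
  Function.invFun (enum β)

lemma enum_idx {α β : Omega1} (h : α ≤ β) : enum β (idx β α) = α :=
  Function.invFun_eq (by rwa [← mem_range, range_enum])

lemma finite_le_idx_lt (β : Omega1) (n : ℕ) : {α | α ≤ β ∧ idx β α < n}.Finite :=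
  ((finite_Iio n).image (enum β)).subset fun α ⟨hα, hn⟩ => ⟨idx β α, hn, enum_idx hα⟩

end Omega1

open Omega1

lemma exists_mk_eq_domNumber : ∃ D : Set (ℕ → ℕ), #D = domNumber ∧
    ∀ f : ℕ → ℕ, ∃ d ∈ D, ∀ᶠ n in Filter.atTop, f n ≤ d n :=
  csInf_mem (s := {κ | ∃ D : Set (ℕ → ℕ), #D = κ ∧
      ∀ f : ℕ → ℕ, ∃ d ∈ D, ∀ᶠ n in Filter.atTop, f n ≤ d n})
    ⟨_, Set.univ, rfl, fun f => ⟨f, mem_univ f, Filter.Eventually.of_forall fun _ => le_rfl⟩⟩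

lemma domNumber_le {D : Set (ℕ → ℕ)}
    (hD : ∀ f : ℕ → ℕ, ∃ d ∈ D, ∀ᶠ n in Filter.atTop, f n ≤ d n) : domNumber ≤ #D :=
  csInf_le' ⟨D, rfl, hD⟩

lemma exists_forall_eventually_lt (u : ℕ → ℕ → ℕ) :
    ∃ f : ℕ → ℕ, ∀ k, ∀ᶠ n in Filter.atTop, u k n < f n := by
  refine ⟨fun n => (Finset.range (n + 1)).sup (u · n) + 1, fun k => ?_⟩
  filter_upwards [Filter.eventually_ge_atTop k] with n hkn
  exact Nat.lt_succ_of_le (Finset.le_sup (f := (u · n)) (Finset.mem_range_succ_iff.2 hkn))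

lemma aleph_one_le_domNumber : ℵ₁ ≤ domNumber := by
  obtain ⟨D, hD, hdom⟩ := exists_mk_eq_domNumber
  rw [← hD, ← succ_aleph0, Order.succ_le_iff, ← not_le, le_aleph0_iff_set_countable]
  intro hc
  obtain ⟨u, rfl⟩ := hc.exists_eq_range ⟨_, (hdom 0).choose_spec.1⟩
  obtain ⟨f, hf⟩ := exists_forall_eventually_lt u
  obtain ⟨_, ⟨k, rfl⟩, hk⟩ := hdom f
  obtain ⟨n, hle, hlt⟩ := (hk.and (hf k)).exists
  exact hle.not_gt hlt

lemma exists_dominating_family_of_domNumber_le (h : domNumber ≤ ℵ₁) :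
    ∃ d : Omega1 → ℕ → ℕ, ∀ f : ℕ → ℕ, ∃ ξ, ∀ᶠ n in Filter.atTop, f n ≤ d ξ n := by
  obtain ⟨D, hD, hdom⟩ := exists_mk_eq_domNumber
  obtain ⟨e⟩ : Nonempty (D ↪ Omega1) := by rw [← Cardinal.le_def, mk_eq, hD]; exact h
  have : Nonempty D := ⟨⟨_, (hdom 0).choose_spec.1⟩⟩
  refine ⟨fun ξ => ((Function.invFun e ξ : D) : ℕ → ℕ), fun f => ?_⟩
  obtain ⟨d, hd, hfd⟩ := hdom f
  exact ⟨e ⟨d, hd⟩, by simpa only [Function.leftInverse_invFun e.injective _] using hfd⟩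

section Partition

variable {p : Omega1 → Omega1 → ℕ}

lemma InjectiveFibers.of_injOn (hp : ∀ β, InjOn (fun α => p α β) (Iio β)) :
    InjectiveFibers p :=
  fun _ _ β hαα' hα'β heq => hαα'.ne (hp β (hαα'.trans hα'β) hα'β heq)

lemma AlmostDisjointFibers.of_finite_collisions
    (hp : ∀ β β', β < β' → {α | α < β ∧ ∃ α' < β', p α β = p α' β'}.Finite) :
    AlmostDisjointFibers p := by
  intro β β' hββ'
  refine ((hp β β' hββ').image fun α => p α β).subset ?_
  rintro n ⟨⟨α, hα, rfl⟩, α', hα', heq⟩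
  exact ⟨α, ⟨hα, α', hα'.trans hββ', heq.symm⟩, rfl⟩

lemma exists_finset_forall_lt_and_injOn (hinj : ∀ β, InjOn (fun α => p α β) (Iio β))
    (hcoll : ∀ β β', β < β' → {α | α < β ∧ ∃ α' < β', p α β = p α' β'}.Finite)
    (hdom : ∀ (ε : Omega1) (h : Omega1 → ℕ), ∃ γ, ∀ β, γ ≤ β → {α | α < ε ∧ p α β ≤ h α}.Finite)
    (ε : Omega1) (h : Omega1 → ℕ) :
    ∃ γ : Omega1, ∀ b : Finset Omega1, (∀ β ∈ b, γ ≤ β) →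
      ∃ Δ : Finset Omega1, (∀ α ∈ Δ, α < ε) ∧
        (∀ α : Omega1, α < ε → α ∉ Δ → ∀ β ∈ b, h α < p α β) ∧
        Set.InjOn (fun x : Omega1 × Omega1 => p x.1 x.2)
          (({α : Omega1 | α < ε} \ ↑Δ) ×ˢ (↑b : Set Omega1)) := by
  obtain ⟨γ, hγ⟩ := hdom ε h
  refine ⟨γ ⊔ ε, fun b hb => ?_⟩
  have hεb : ∀ β ∈ b, ε ≤ β := fun β hβ => le_sup_right.trans (hb β hβ)
  set pairs := (b ×ˢ b).filter fun q => q.1 < q.2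
  have hbad : {α | α < ε ∧ ((∃ β ∈ b, p α β ≤ h α) ∨
      ∃ q ∈ pairs, α < q.1 ∧ ∃ α' < q.2, p α q.1 = p α' q.2)}.Finite := by
    refine ((b.finite_toSet.biUnion fun β hβ => hγ β (le_sup_left.trans (hb β hβ))).union
      (pairs.finite_toSet.biUnion fun q hq => hcoll q.1 q.2 (Finset.mem_filter.1 hq).2)).subset ?_
    rintro α ⟨hαε, ⟨β, hβ, hle⟩ | ⟨q, hq, hcol⟩⟩
    · exact Or.inl (mem_biUnion hβ ⟨hαε, hle⟩)
    · exact Or.inr (mem_biUnion hq hcol)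
  refine ⟨hbad.toFinset, fun α hα => ((Finite.mem_toFinset hbad).1 hα).1, ?_, ?_⟩
  · intro α hαε hαΔ β hβ
    by_contra! hle
    exact hαΔ ((Finite.mem_toFinset hbad).2 ⟨hαε, Or.inl ⟨β, hβ, hle⟩⟩)
  · have hmem : ∀ {α α' β β'}, α < ε → β ∈ b → β' ∈ b → α' < ε → β < β' →
        p α β = p α' β' → α ∈ hbad.toFinset := fun hαε hβ hβ' hα'ε hlt heq =>
      (Finite.mem_toFinset hbad).2 ⟨hαε, Or.inr ⟨(_, _), Finset.mem_filter.2
        ⟨Finset.mem_product.2 ⟨hβ, hβ'⟩, hlt⟩, hαε.trans_le (hεb _ hβ),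
          _, hα'ε.trans_le (hεb _ hβ'), heq⟩⟩
    rintro ⟨α, β⟩ ⟨⟨hαε, hαΔ⟩, hβ⟩ ⟨α', β'⟩ ⟨⟨hα'ε, hα'Δ⟩, hβ'⟩ heq
    rcases lt_trichotomy β β' with hlt | rfl | hgt
    · exact absurd (hmem hαε hβ hβ' hα'ε hlt heq) hαΔ
    · exact Prod.ext (hinj β (hαε.trans_le (hεb β hβ)) (hα'ε.trans_le (hεb β hβ)) heq) rfl
    · exact absurd (hmem hα'ε hβ' hβ hαε hgt heq.symm) hα'Δ

end Partition

abbrev CohenCondition : Type :=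
  {q : Finset Omega1 × (Omega1 →₀ ℕ) // Set.InjOn q.2 q.1}

instance : Nonempty CohenCondition := ⟨⟨(∅, 0), by simp⟩⟩

lemma mk_cohenCondition_le : #CohenCondition ≤ ℵ₁ := by
  refine mk_subtype_le _ |>.trans_eq ?_
  rw [mk_prod, Cardinal.lift_id, Cardinal.lift_id, mk_finset_of_infinite,
    mk_finsupp_of_infinite, mk_nat, mk_eq, max_eq_left (aleph0_le_aleph 1),
    mul_eq_self (aleph0_le_aleph 1)]

namespace Construction

variable (d : Omega1 → ℕ → ℕ) (c : Omega1 → CohenCondition)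

def bound (β : Omega1) (prev : Omega1 → Omega1 → ℕ) (α : Omega1) : ℕ :=
  let n := idx β α
  (Finset.Iic n).sup (fun k => prev (enum β k) (enum (enum β k) n)) ⊔
    (Finset.Iic n).sup (fun i => (Finset.Iic n).sup fun j => d (enum β j) (idx (enum β i) α)) ⊔
    (c β).1.1.sup (c β).1.2

def step (β : Omega1) (prev : Omega1 → Omega1 → ℕ) (α : Omega1) : ℕ :=
  if α ∈ (c β).1.1 then (c β).1.2 α else Nat.pair (idx β α) (bound d c β prev α + 1)

def fiber : Omega1 → Omega1 → ℕ :=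
  wellFounded_lt.fix fun β prev => step d c β fun δ => if h : δ < β then prev δ h else 0

def earlier (β : Omega1) : Omega1 → Omega1 → ℕ :=
  fun δ => if δ < β then fiber d c δ else 0

variable {d c}

lemma fiber_of_mem {β α : Omega1} (hα : α ∈ (c β).1.1) : fiber d c β α = (c β).1.2 α := by
  rw [fiber, wellFounded_lt.fix_eq, step, if_pos hα]

lemma fiber_of_notMem {β α : Omega1} (hα : α ∉ (c β).1.1) :
    fiber d c β α = Nat.pair (idx β α) (bound d c β (earlier d c β) α + 1) := by
  rw [fiber, wellFounded_lt.fix_eq, step, if_neg hα]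
  rfl

lemma bound_lt_fiber {β α : Omega1} (hα : α ∉ (c β).1.1) :
    bound d c β (earlier d c β) α < fiber d c β α :=
  (fiber_of_notMem hα).symm ▸ (Nat.lt_succ_self _).trans_le (Nat.right_le_pair _ _)

lemma fiber_lt_fiber {δ β α : Omega1} (hδ : δ < β) (hα : α ∉ (c β).1.1)
    (hidx : idx β δ ≤ idx β α) : fiber d c δ (enum δ (idx β α)) < fiber d c β α := by
  refine lt_of_le_of_lt ?_ (bound_lt_fiber hα)
  refine le_trans ?_ (le_sup_left.trans le_sup_left)
  convert Finset.le_sup (f := fun k => earlier d c β (enum β k) (enum (enum β k) (idx β α)))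
    (Finset.mem_Iic.2 hidx) using 1
  simp only [enum_idx hδ.le, earlier, if_pos hδ]

lemma family_apply_lt_fiber {ε ξ β α : Omega1} (hε : ε ≤ β) (hξ : ξ ≤ β) (hα : α ∉ (c β).1.1)
    (hεα : idx β ε ≤ idx β α) (hξα : idx β ξ ≤ idx β α) : d ξ (idx ε α) < fiber d c β α := by
  refine lt_of_le_of_lt ?_ (bound_lt_fiber hα)
  refine le_trans ?_ (le_sup_right.trans le_sup_left)
  refine le_trans ?_ (Finset.le_sup (Finset.mem_Iic.2 hεα))
  convert Finset.le_sup (f := fun j => d (enum β j) (idx (enum β (idx β ε)) α))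
    (Finset.mem_Iic.2 hξα) using 1
  simp only [enum_idx hε, enum_idx hξ]

lemma cohenValue_lt_fiber {β α α' : Omega1} (hα' : α' ∈ (c β).1.1) (hα : α ∉ (c β).1.1) :
    (c β).1.2 α' < fiber d c β α :=
  ((Finset.le_sup hα').trans le_sup_right).trans_lt (bound_lt_fiber hα)

lemma injOn_fiber (β : Omega1) : InjOn (fiber d c β) (Iic β) := by
  intro α hα α' hα' heq
  by_cases h : α ∈ (c β).1.1 <;> by_cases h' : α' ∈ (c β).1.1
  · exact (c β).2 h h' (by rwa [fiber_of_mem h, fiber_of_mem h'] at heq)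
  · exact absurd (heq ▸ fiber_of_mem h ▸ cohenValue_lt_fiber h h') (lt_irrefl _)
  · exact absurd (heq ▸ fiber_of_mem h' ▸ cohenValue_lt_fiber h' h) (lt_irrefl _)
  · rw [fiber_of_notMem h, fiber_of_notMem h'] at heq
    rw [← enum_idx hα, ← enum_idx hα', (Nat.pair_eq_pair.1 heq).1]

lemma idx_lt_of_fiber_eq {β β' α α' : Omega1} (hβ : β < β') (hα : α ≤ β)
    (hA : α ∉ (c β).1.1) (hA' : α' ∉ (c β').1.1) (heq : fiber d c β α = fiber d c β' α') :
    idx β α < idx β' β := by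
  have hidx : idx β α = idx β' α' := by
    rw [fiber_of_notMem hA, fiber_of_notMem hA'] at heq
    exact (Nat.pair_eq_pair.1 heq).1
  by_contra! hle
  have := fiber_lt_fiber (d := d) hβ hA' (hidx ▸ hle)
  rw [← hidx, enum_idx hα] at this
  exact this.ne heq

lemma finite_collisions_fiber {β β' : Omega1} (hβ : β < β') :
    {α | α < β ∧ ∃ α' < β', fiber d c β α = fiber d c β' α'}.Finite := by
  have hval : {α | α ≤ β ∧ fiber d c β α ∈ (c β').1.2 '' (c β').1.1}.Finite :=
    Finite.of_finite_image (((c β').1.1.finite_toSet.image _).subset (image_subset_iff.2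
      fun _ h => h.2)) ((injOn_fiber β).mono fun _ h => h.1)
  refine (((c β).1.1.finite_toSet.union hval).union (finite_le_idx_lt β (idx β' β))).subset ?_
  rintro α ⟨hαβ, α', -, heq⟩
  by_cases hA : α ∈ (c β).1.1
  · exact Or.inl (Or.inl hA)
  by_cases hA' : α' ∈ (c β').1.1
  · exact Or.inl (Or.inr ⟨hαβ.le, α', hA', by rw [heq, fiber_of_mem hA']⟩)
  · exact Or.inr ⟨hαβ.le, idx_lt_of_fiber_eq hβ hαβ.le hA hA' heq⟩

lemma cohenFibers_fiber (hc : ∀ t γ, ∃ β, γ ≤ β ∧ c β = t) :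
    CohenFibers fun α β => fiber d c β α := by
  intro a g hg γ
  have hg' : InjOn (Finsupp.indicator a fun α _ => g α) a := fun x hx y hy h =>
    hg hx hy (by rwa [Finsupp.indicator_of_mem hx, Finsupp.indicator_of_mem hy] at h)
  obtain ⟨β, hγβ, hβ⟩ := hc ⟨(a, _), hg'⟩ γ
  refine ⟨β, hγβ, fun α hα _ => ?_⟩
  show fiber d c β α = g α
  rw [fiber_of_mem (by rw [hβ]; exact hα), hβ]
  exact Finsupp.indicator_of_mem hα (fun α _ => g α)

lemma finite_setOf_fiber_le (hd : ∀ f : ℕ → ℕ, ∃ ξ, ∀ᶠ n in Filter.atTop, f n ≤ d ξ n)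
    (ε : Omega1) (h : Omega1 → ℕ) :
    ∃ γ, ∀ β, γ ≤ β → {α | α < ε ∧ fiber d c β α ≤ h α}.Finite := by
  obtain ⟨ξ, hξ⟩ := hd fun n => h (enum ε n)
  obtain ⟨N, hN⟩ := Filter.eventually_atTop.1 hξ
  refine ⟨ε ⊔ ξ, fun β hβ => ?_⟩
  have hεβ : ε ≤ β := le_sup_left.trans hβ
  have hξβ : ξ ≤ β := le_sup_right.trans hβ
  refine (((c β).1.1.finite_toSet.union (finite_le_idx_lt β (idx β ε ⊔ idx β ξ))).union
    (finite_le_idx_lt ε N)).subset ?_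
  rintro α ⟨hαε, hle⟩
  by_contra hα
  have hA : α ∉ (c β).1.1 := fun h => hα (Or.inl (Or.inl h))
  have hidx : idx β ε ⊔ idx β ξ ≤ idx β α :=
    not_lt.1 fun h => hα (Or.inl (Or.inr ⟨hαε.le.trans hεβ, h⟩))
  have hNα : N ≤ idx ε α := not_lt.1 fun h => hα (Or.inr ⟨hαε.le, h⟩)
  refine hle.not_gt ?_
  calc h α = h (enum ε (idx ε α)) := by rw [enum_idx hαε.le]
    _ ≤ d ξ (idx ε α) := hN _ hNα
    _ < fiber d c β α :=
      family_apply_lt_fiber hεβ hξβ hA (le_sup_left.trans hidx) (le_sup_right.trans hidx)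

end Construction

lemma domNumber_le_aleph_one {p : Omega1 → Omega1 → ℕ}
    (hp : ∀ (ε : Omega1) (h : Omega1 → ℕ), ∃ β, {α | α < ε ∧ p α β ≤ h α}.Finite) :
    domNumber ≤ ℵ₁ := by
  let ι := Infinite.natEmbedding Omega1
  obtain ⟨ε, hε⟩ := exists_forall_lt_of_countable (countable_range ι)
  refine (domNumber_le (D := range fun β n => p (ι n) β) fun f => ?_).trans
    (mk_range_le.trans mk_eq.le)
  obtain ⟨β, hβ⟩ := hp ε (Function.extend ι f 0)
  refine ⟨_, mem_range_self β, ?_⟩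
  have hfin := (hβ.preimage ι.injective.injOn).eventually_cofinite_notMem
  rw [Nat.cofinite_eq_atTop] at hfin
  filter_upwards [hfin] with n hn
  refine (not_le.1 fun hle => hn ⟨hε _ (mem_range_self n), ?_⟩).le
  rwa [ι.injective.extend_apply]

/-- `𝔡 = ℵ₁` iff there is a partition `p : [ω₁]² → ω` with injective, almost-disjoint
and Cohen fibers such that for every `ε < ω₁` and every `h : ε → ω` there is `γ < ω₁`
such that for every finite `b ⊆ ω₁ \ γ` there is a finite `Δ ⊆ ε` with:
(i) `h(α) < p(α,β)` for all `α ∈ ε \ Δ` and `β ∈ b`, and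
(ii) `p` is injective on `(ε \ Δ) × b`. -/
theorem statement13 :
    domNumber = Cardinal.aleph 1 ↔
      ∃ p : Omega1 → Omega1 → ℕ,
        InjectiveFibers p ∧ AlmostDisjointFibers p ∧ CohenFibers p ∧
        ∀ (ε : Omega1) (h : Omega1 → ℕ), ∃ γ : Omega1,
          ∀ b : Finset Omega1, (∀ β ∈ b, γ ≤ β) →
            ∃ Δ : Finset Omega1, (∀ α ∈ Δ, α < ε) ∧
              (∀ α : Omega1, α < ε → α ∉ Δ → ∀ β ∈ b, h α < p α β) ∧
              Set.InjOn (fun x : Omega1 × Omega1 => p x.1 x.2)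
                (({α : Omega1 | α < ε} \ ↑Δ) ×ˢ (↑b : Set Omega1)) := by
  constructor
  · intro hd
    obtain ⟨d, hd⟩ := exists_dominating_family_of_domNumber_le hd.le
    obtain ⟨c, hc⟩ := exists_cofinal_fibers mk_cohenCondition_le
    have hinj β : InjOn (fun α => Construction.fiber d c β α) (Iio β) :=
      (Construction.injOn_fiber β).mono Iio_subset_Iic_self
    have hcoll β β' (h : β < β') := Construction.finite_collisions_fiber (d := d) (c := c) h
    exact ⟨_, .of_injOn hinj, .of_finite_collisions hcoll, Construction.cohenFibers_fiber hc,
      exists_finset_forall_lt_and_injOn hinj hcoll (Construction.finite_setOf_fiber_le hd)⟩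
  · rintro ⟨p, -, -, -, hp⟩
    refine le_antisymm (domNumber_le_aleph_one (p := p) fun ε h => ?_) aleph_one_le_domNumber
    obtain ⟨γ, hγ⟩ := hp ε h
    obtain ⟨Δ, -, hΔ, -⟩ := hγ {γ} (by simp)
    refine ⟨γ, Δ.finite_toSet.subset fun α ⟨hαε, hle⟩ => ?_⟩
    by_contra hα
    exact (hΔ α hαε hα γ (Finset.mem_singleton_self γ)).not_ge hle
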